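/- arXiv:alg-geom/9604008 — 6 statements merged into one kernel-verified Lean document; each statement's English description precedes it below -/
import Mathlib

section
/- Let R be a semisimple ring and e, e' ∈ R idempotents such that the left ideals Re and Re' are isomorphic as left R-modules and the left ideals R(1−e) and R(1−e') are isomorphic as left R-modules. Then there exists a unit u ∈ R^× with u e u⁻¹ = e'. -/
/-!
Write `Re ≅ Re'` as right multiplication by some `a ∈ eRe'` with inverse right multiplication by
`b ∈ e'Re`, so that `ab = e` and `ba = e'`; likewise `R(1-e) ≅ R(1-e')` gives `c, d` with
`cd = 1 - e` and `dc = 1 - e'`. The cross terms vanish by orthogonality of the idempotents, so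
`u = a + c` is invertible with inverse `b + d`, and `eu = a = ue'`, i.e. `u⁻¹eu = e'`.
-/

section

variable {R : Type*} [Ring R]

/-- A Murray–von Neumann equivalence `e ~ e'`, witnessed by `a ∈ eRe'` and `b ∈ e'Re`. -/
structure MurrayVonNeumannEquiv (e e' : R) where
  a : R
  b : R
  left_mul_a : e * a = a
  a_mul_right : a * e' = a
  left_mul_b : e' * b = b
  b_mul_right : b * e = b
  a_mul_b : a * b = e
  b_mul_a : b * a = e'

namespace IsIdempotentElem

variable {e : R}

theorem mul_eq_self_of_mem_span (he : IsIdempotentElem e) {x : R}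
    (hx : x ∈ Submodule.span R {e}) : x * e = x := by
  obtain ⟨r, rfl⟩ := Submodule.mem_span_singleton.mp hx
  rw [smul_eq_mul, mul_assoc, he.eq]

theorem linearMap_span_apply (he : IsIdempotentElem e) {M : Type*} [AddCommGroup M] [Module R M]
    (f : Submodule.span R {e} →ₗ[R] M) (x : Submodule.span R {e}) :
    f x = (x : R) • f ⟨e, Submodule.mem_span_singleton_self e⟩ := by
  rw [← map_smul]
  congr 1
  exact Subtype.ext (he.mul_eq_self_of_mem_span x.2).symm

end IsIdempotentElem

theorem mul_eq_zero_of_mul_eq_self {x y f g : R} (hx : x * f = x) (hy : g * y = y)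
    (hfg : f * g = 0) : x * y = 0 := by
  rw [← hx, ← hy, mul_assoc, ← mul_assoc f, hfg, zero_mul, mul_zero]

namespace MurrayVonNeumannEquiv

variable {e e' : R}

def ofLinearEquiv (he : IsIdempotentElem e) (he' : IsIdempotentElem e')
    (f : Submodule.span R {e} ≃ₗ[R] Submodule.span R {e'}) : MurrayVonNeumannEquiv e e' where
  a := f ⟨e, Submodule.mem_span_singleton_self e⟩
  b := f.symm ⟨e', Submodule.mem_span_singleton_self e'⟩
  left_mul_a := by
    simpa using congrArg Subtype.val (he.linearMap_span_apply f.toLinearMap ⟨e, _⟩).symm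
  a_mul_right := he'.mul_eq_self_of_mem_span (Subtype.prop _)
  left_mul_b := by
    simpa using congrArg Subtype.val (he'.linearMap_span_apply f.symm.toLinearMap ⟨e', _⟩).symm
  b_mul_right := he.mul_eq_self_of_mem_span (Subtype.prop _)
  a_mul_b := by
    simpa using
      congrArg Subtype.val (he'.linearMap_span_apply f.symm.toLinearMap (f ⟨e, _⟩)).symm
  b_mul_a := by
    simpa using
      congrArg Subtype.val (he.linearMap_span_apply f.toLinearMap (f.symm ⟨e', _⟩)).symm

theorem exists_unit_conj (he : IsIdempotentElem e) (he' : IsIdempotentElem e')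
    (p : MurrayVonNeumannEquiv e e') (q : MurrayVonNeumannEquiv (1 - e) (1 - e')) :
    ∃ u : Rˣ, (u : R) * e * ↑u⁻¹ = e' := by
  have hvu : (p.b + q.b) * (p.a + q.a) = 1 := by
    rw [add_mul, mul_add, mul_add, p.b_mul_a, q.b_mul_a,
      mul_eq_zero_of_mul_eq_self p.b_mul_right q.left_mul_a he.mul_one_sub_self,
      mul_eq_zero_of_mul_eq_self q.b_mul_right p.left_mul_a he.one_sub_mul_self]
    abel
  have huv : (p.a + q.a) * (p.b + q.b) = 1 := by
    rw [add_mul, mul_add, mul_add, p.a_mul_b, q.a_mul_b,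
      mul_eq_zero_of_mul_eq_self p.a_mul_right q.left_mul_b he'.mul_one_sub_self,
      mul_eq_zero_of_mul_eq_self q.a_mul_right p.left_mul_b he'.one_sub_mul_self]
    abel
  have hconj : e * (p.a + q.a) = (p.a + q.a) * e' := by
    rw [mul_add, add_mul, p.left_mul_a, p.a_mul_right,
      mul_eq_zero_of_mul_eq_self he.eq q.left_mul_a he.mul_one_sub_self,
      mul_eq_zero_of_mul_eq_self q.a_mul_right he'.eq he'.one_sub_mul_self]
  refine ⟨⟨p.b + q.b, p.a + q.a, hvu, huv⟩, ?_⟩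
  change (p.b + q.b) * e * (p.a + q.a) = e'
  rw [mul_assoc, hconj, ← mul_assoc, hvu, one_mul]

end MurrayVonNeumannEquiv

end

theorem stmt_8_general {R : Type*} [Ring R] (e e' : R)
    (he : e * e = e) (he' : e' * e' = e')
    (h1 : Nonempty ((Submodule.span R {e} : Submodule R R) ≃ₗ[R]
      (Submodule.span R {e'} : Submodule R R)))
    (h2 : Nonempty ((Submodule.span R {1 - e} : Submodule R R) ≃ₗ[R]
      (Submodule.span R {1 - e'} : Submodule R R))) :
    ∃ u : Rˣ, (u : R) * e * ↑u⁻¹ = e' := by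
  obtain ⟨f⟩ := h1
  obtain ⟨g⟩ := h2
  have he : IsIdempotentElem e := he
  have he' : IsIdempotentElem e' := he'
  exact MurrayVonNeumannEquiv.exists_unit_conj he he'
    (.ofLinearEquiv he he' f) (.ofLinearEquiv he.one_sub he'.one_sub g)

/-- In a semisimple ring, two idempotents `e, e'` with `Re ≅ Re'` and
`R(1-e) ≅ R(1-e')` as left `R`-modules are conjugate by a unit. -/
theorem stmt_8 {R : Type*} [Ring R] [IsSemisimpleRing R] (e e' : R)
    (he : e * e = e) (he' : e' * e' = e')
    (h1 : Nonempty ((Submodule.span R {e} : Submodule R R) ≃ₗ[R]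
      (Submodule.span R {e'} : Submodule R R)))
    (h2 : Nonempty ((Submodule.span R {1 - e} : Submodule R R) ≃ₗ[R]
      (Submodule.span R {1 - e'} : Submodule R R))) :
    ∃ u : Rˣ, (u : R) * e * ↑u⁻¹ = e' :=
  stmt_8_general e e' he he' h1 h2
end

section
/- Let p be an odd prime and G = GL₂(F_p). Let St denote the Steinberg representation of G over ℚ̄ (the p-dimensional irreducible constituent of Ind_B^G 1, where B is a Borel subgroup). Then the space of T-invariants St^T is 2-dimensional, where T is the diagonal torus; moreover St^T is the direct sum of the two 1-dimensional spaces St^{B₊} and St^{B₋} of invariants under the upper and lower triangular Borel subgroups. -/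
/-!
Fix a nonzero `B₊`-invariant vector `v ∈ St`. Frobenius reciprocity gives a `G`-map
`ψ : k[G/B₊] → St`, `δ_{gB₊} ↦ g v`, which is onto since `St` is irreducible, and which kills the
constant function, whose image is `G`-invariant. Averaging over a subgroup `K` shows that `St^K`
is the image under `ψ` of the `K`-invariant functions on `G/B₊ = P¹`, so
`dim St^K < #(K-orbits on P¹)`. The torus has the three orbits `{∞}`, `{0}` and `P¹ ∖ {0, ∞}`,
whence `dim St^T ≤ 2`. On the other hand `St^{B₊} ∋ v` and `St^{B₋} ∋ w v` are nonzero subspaces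
of `St^T`, and they meet trivially because `B₊` and `B₋` generate `G`.
-/

open Module Matrix

variable (p : ℕ) [Fact p.Prime]

/-- The Borel subgroup `B₊` of upper triangular matrices in `GL₂(𝔽_p)`. -/
def Bplus : Subgroup (GL (Fin 2) (ZMod p)) where
  carrier := {g | (g : Matrix (Fin 2) (Fin 2) (ZMod p)) 1 0 = 0}
  one_mem' := by simp [Matrix.one_apply]
  mul_mem' := by
    intro a b ha hb
    simp only [Set.mem_setOf_eq, Units.val_mul, Matrix.mul_apply, Fin.sum_univ_two] at *
    simp [ha, hb]
  inv_mem' := by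
    intro a ha
    simp only [Set.mem_setOf_eq] at *
    rw [Matrix.coe_units_inv, Matrix.inv_def]
    simp [Matrix.adjugate_fin_two, ha]

/-- The Borel subgroup `B₋` of lower triangular matrices in `GL₂(𝔽_p)`. -/
def Bminus : Subgroup (GL (Fin 2) (ZMod p)) where
  carrier := {g | (g : Matrix (Fin 2) (Fin 2) (ZMod p)) 0 1 = 0}
  one_mem' := by simp [Matrix.one_apply]
  mul_mem' := by
    intro a b ha hb
    simp only [Set.mem_setOf_eq, Units.val_mul, Matrix.mul_apply, Fin.sum_univ_two] at *
    simp [ha, hb]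
  inv_mem' := by
    intro a ha
    simp only [Set.mem_setOf_eq] at *
    rw [Matrix.coe_units_inv, Matrix.inv_def]
    simp [Matrix.adjugate_fin_two, ha]

/-- The split maximal torus `T = B₊ ∩ B₋` of diagonal matrices in `GL₂(𝔽_p)`. -/
def Tsplit : Subgroup (GL (Fin 2) (ZMod p)) := Bplus p ⊓ Bminus p

/-- The embedding `𝔽_{p²}^× → GL₂(𝔽_p)` given by a choice of an `𝔽_p`-basis `b`
of `𝔽_{p²}` (each `z` acts by multiplication on `𝔽_{p²} ≅ 𝔽_p²`). -/
noncomputable def torusHom (b : Basis (Fin 2) (ZMod p) (GaloisField p 2)) :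
    (GaloisField p 2)ˣ →* GL (Fin 2) (ZMod p) :=
  Units.map (((LinearMap.toMatrixAlgEquiv b).toAlgHom.comp
    (Algebra.lmul (ZMod p) (GaloisField p 2))).toRingHom.toMonoidHom)

/-- The non-split maximal torus `T' ≅ 𝔽_{p²}^×`. -/
noncomputable def Tnonsplit (b : Basis (Fin 2) (ZMod p) (GaloisField p 2)) :
    Subgroup (GL (Fin 2) (ZMod p)) := (torusHom p b).range

lemma Submodule.finrank_map_lt {K V W : Type*} [Field K] [AddCommGroup V] [Module K V]
    [AddCommGroup W] [Module K W] (f : V →ₗ[K] W) {U : Submodule K V} [FiniteDimensional K U]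
    {u : V} (hu : u ∈ U) (hu0 : u ≠ 0) (hfu : f u = 0) :
    finrank K (U.map f) < finrank K U := by
  have hker : LinearMap.ker (f.domRestrict U) ≠ ⊥ :=
    (Submodule.ne_bot_iff _).mpr ⟨⟨u, hu⟩, hfu, by simpa using hu0⟩
  have := LinearMap.finrank_range_add_finrank_ker (f.domRestrict U)
  rw [LinearMap.range_domRestrict] at this
  have := Submodule.one_le_finrank_iff.mpr hker
  omega

namespace Representation

section PermutationRep

variable (k G X : Type*) [CommSemiring k] [Group G] [MulAction G X]

def ofMulActionFun : Representation k G (X → k) where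
  toFun g := LinearMap.funLeft k k (g⁻¹ • ·)
  map_one' := by ext; simp
  map_mul' g h := by ext; simp [mul_smul]

variable {k G X}

@[simp]
lemma ofMulActionFun_apply (g : G) (f : X → k) (x : X) :
    ofMulActionFun k G X g f x = f (g⁻¹ • x) := rfl

lemma finrank_invariants_ofMulActionFun_le {k ι : Type*} [Field k] [Fintype ι] (s : ι → X)
    (hs : ∀ x, ∃ i, ∃ g : G, g • s i = x) :
    finrank k (invariants (ofMulActionFun k G X)) ≤ Fintype.card ι := by
  let restrict : invariants (ofMulActionFun k G X) →ₗ[k] (ι → k) :=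
    LinearMap.funLeft k k s ∘ₗ Submodule.subtype _
  have hinj : Function.Injective restrict := by
    refine (injective_iff_map_eq_zero restrict).mpr fun ⟨f, hf⟩ h0 ↦ ?_
    ext x
    obtain ⟨i, g, rfl⟩ := hs x
    have hfs : f (s i) = 0 := congrFun h0 i
    simpa [hfs] using congrFun (hf g⁻¹) (s i)
  simpa using LinearMap.finrank_le_finrank_of_injective hinj

end PermutationRep

section Averaging

variable {k G V W : Type*} [CommRing k] [Group G] [Fintype G] [Invertible (Fintype.card G : k)]
  [AddCommGroup V] [Module k V] [AddCommGroup W] [Module k W]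
  {ρ : Representation k G V} {σ : Representation k G W} {f : W →ₗ[k] V}

lemma IsIntertwiningMap.averageMap_apply (hf : σ.IsIntertwiningMap ρ f) (w : W) :
    f (averageMap σ w) = averageMap ρ (f w) := by
  simp [GroupAlgebra.average, map_sum, hf.isIntertwining]

lemma invariants_le_map_invariants (hf : σ.IsIntertwiningMap ρ f)
    (hsurj : Function.Surjective f) : invariants ρ ≤ (invariants σ).map f := by
  intro v hv
  obtain ⟨w, rfl⟩ := hsurj v
  exact ⟨averageMap σ w, averageMap_invariant σ w,
    by rw [hf.averageMap_apply, averageMap_id ρ _ hv]⟩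

end Averaging

section Subgroups

variable {k G V : Type*} [CommRing k] [Group G] [AddCommGroup V] [Module k V]
  (ρ : Representation k G V)

lemma apply_mem_invariants_comp_subtype {H K : Subgroup G} {g : G}
    (hKH : ∀ a ∈ K, g⁻¹ * a * g ∈ H) {v : V} (hv : v ∈ invariants (ρ.comp H.subtype)) :
    ρ g v ∈ invariants (ρ.comp K.subtype) := fun ⟨a, ha⟩ ↦ by
  have hconj : ρ (g⁻¹ * a * g) v = v := hv ⟨_, hKH a ha⟩
  calc ρ a (ρ g v) = ρ g (ρ (g⁻¹ * a * g) v) := by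
        simp only [← Module.End.mul_apply, ← map_mul]; group
    _ = ρ g v := by rw [hconj]

lemma invariants_inf_invariants_le {H₁ H₂ : Subgroup G} (h : H₁ ⊔ H₂ = ⊤) :
    invariants (ρ.comp H₁.subtype) ⊓ invariants (ρ.comp H₂.subtype) ≤ invariants ρ := by
  rintro w ⟨hw₁, hw₂⟩ g
  let fixing : Subgroup G :=
    { carrier := {a | ρ a w = w}
      one_mem' := by simp
      mul_mem' := fun ha hb ↦ by simp_all
      inv_mem' := fun {a} (ha : ρ a w = w) ↦
        calc ρ a⁻¹ w = ρ a⁻¹ (ρ a w) := by rw [ha]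
          _ = w := ρ.inv_self_apply a w }
  have hle : H₁ ⊔ H₂ ≤ fixing := sup_le (fun a ha ↦ hw₁ ⟨a, ha⟩) (fun a ha ↦ hw₂ ⟨a, ha⟩)
  exact hle (h ▸ Subgroup.mem_top g)

end Subgroups

section Irreducible

variable {k G V : Type*} [Field k] [Group G] [AddCommGroup V] [Module k V]
  (ρ : Representation k G V) [IsIrreducible ρ]

lemma finrank_eq_one_of_invariants_ne_bot (h : invariants ρ ≠ ⊥) : finrank k V = 1 := by
  obtain ⟨v, hv, hv0⟩ := (Submodule.ne_bot_iff _).mp h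
  let line : Subrepresentation ρ :=
    ⟨k ∙ v, fun g w hw ↦ by
      obtain ⟨c, rfl⟩ := Submodule.mem_span_singleton.mp hw
      simpa [hv g] using hw⟩
  have hline : line = ⊤ := (eq_bot_or_eq_top line).resolve_left fun hbot ↦ hv0 <|
    (Submodule.mem_bot k).mp
      (hbot ▸ Submodule.mem_span_singleton_self v : v ∈ (⊥ : Subrepresentation ρ))
  rw [← finrank_top k V, ← finrank_span_singleton (K := k) hv0]
  exact congrArg (fun U : Subrepresentation ρ ↦ finrank k U.toSubmodule) hline |>.symm

end Irreducible

section CosetSum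

variable {k G V : Type*} [Field k] [Group G] [AddCommGroup V] [Module k V]
  (ρ : Representation k G V) {H : Subgroup G} {v : V}

def cosetVec (hv : v ∈ invariants (ρ.comp H.subtype)) : G ⧸ H → V :=
  Quotient.lift (fun g ↦ ρ g v) fun a b hab ↦ by
    have hab : ρ (a⁻¹ * b) v = v := hv ⟨_, QuotientGroup.leftRel_apply.mp hab⟩
    calc ρ a v = ρ a (ρ (a⁻¹ * b) v) := by rw [hab]
      _ = ρ b v := by rw [← Module.End.mul_apply, ← map_mul, mul_inv_cancel_left]

variable (hv : v ∈ invariants (ρ.comp H.subtype))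

@[simp]
lemma cosetVec_mk (g : G) : cosetVec ρ hv g = ρ g v := rfl

lemma cosetVec_smul (g : G) (x : G ⧸ H) :
    cosetVec ρ hv (g • x) = ρ g (cosetVec ρ hv x) := by
  obtain ⟨a, rfl⟩ := QuotientGroup.mk_surjective x
  show ρ (g * a) v = ρ g (ρ a v)
  rw [map_mul, Module.End.mul_apply]

variable [Fintype (G ⧸ H)]

/-- The map `k[G ⧸ H] → V` corresponding to `v` under Frobenius reciprocity. -/
def cosetSum : (G ⧸ H → k) →ₗ[k] V := Fintype.linearCombination k (cosetVec ρ hv)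

lemma isIntertwiningMap_cosetSum :
    (ofMulActionFun k G (G ⧸ H)).IsIntertwiningMap ρ (cosetSum ρ hv) := by
  refine ⟨fun g f ↦ ?_⟩
  simp only [cosetSum, Fintype.linearCombination_apply, ofMulActionFun_apply, map_sum, map_smul,
    ← cosetVec_smul]
  exact Fintype.sum_equiv (MulAction.toPerm g⁻¹) _ _ fun x ↦ by simp

lemma cosetSum_surjective [IsIrreducible ρ] (hv0 : v ≠ 0) :
    Function.Surjective (cosetSum ρ hv) := by
  classical
  let ψ := (cosetSum ρ hv).intertwiningMap_of_isIntertwiningMap _ ρ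
    (isIntertwiningMap_cosetSum ρ hv).isIntertwining
  refine (IsIrreducible.surjective_or_eq_zero ψ).resolve_right fun hψ ↦ hv0 ?_
  have := congrArg (· (Pi.single (QuotientGroup.mk 1) 1)) hψ
  simpa [ψ, cosetSum, Fintype.linearCombination_apply_single, ← QuotientGroup.mk_one] using this

lemma cosetSum_one_mem_invariants : cosetSum ρ hv 1 ∈ invariants ρ := fun g ↦
  ((isIntertwiningMap_cosetSum ρ hv).isIntertwining g 1).symm

end CosetSum

theorem finrank_invariants_lt_card {k G V : Type*} [Field k] [Group G] [AddCommGroup V]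
    [Module k V] {ρ : Representation k G V} [IsIrreducible ρ] (hG : invariants ρ = ⊥)
    {H : Subgroup G} [Fintype (G ⧸ H)] {v : V} (hv : v ∈ invariants (ρ.comp H.subtype))
    (hv0 : v ≠ 0) {K : Subgroup G} [Fintype K] [Invertible (Fintype.card K : k)] {ι : Type*}
    [Fintype ι] (s : ι → G ⧸ H) (hs : ∀ x, ∃ i, ∃ t : K, (t : G) • s i = x) :
    finrank k (invariants (ρ.comp K.subtype)) < Fintype.card ι := by
  set W := invariants ((ofMulActionFun k G (G ⧸ H)).comp K.subtype)
  have hle : invariants (ρ.comp K.subtype) ≤ W.map (cosetSum ρ hv) :=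
    invariants_le_map_invariants ⟨fun t ↦ (isIntertwiningMap_cosetSum ρ hv).isIntertwining t⟩
      (cosetSum_surjective ρ hv hv0)
  have hker : cosetSum ρ hv 1 = 0 := by
    simpa [hG] using cosetSum_one_mem_invariants ρ hv
  calc finrank k (invariants (ρ.comp K.subtype))
      ≤ finrank k (W.map (cosetSum ρ hv)) := Submodule.finrank_mono hle
    _ < finrank k W := Submodule.finrank_map_lt _ (u := 1) (fun _ ↦ rfl) one_ne_zero hker
    _ ≤ Fintype.card ι := finrank_invariants_ofMulActionFun_le (G := K) s hs

end Representation

variable {p}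

lemma mem_Bplus_iff {g : GL (Fin 2) (ZMod p)} : g ∈ Bplus p ↔ g.1 1 0 = 0 := Iff.rfl

lemma mem_Bminus_iff {g : GL (Fin 2) (ZMod p)} : g ∈ Bminus p ↔ g.1 0 1 = 0 := Iff.rfl

lemma inv_mul_mem_Bplus_iff (g h : GL (Fin 2) (ZMod p)) :
    g⁻¹ * h ∈ Bplus p ↔ g.1 0 0 * h.1 1 0 = h.1 0 0 * g.1 1 0 := by
  have hdet : g.1.det ≠ 0 := (isUnits_det_units g).ne_zero
  rw [mem_Bplus_iff, Units.val_mul, coe_units_inv, inv_def, Ring.inverse_eq_inv', smul_mul,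
    Matrix.smul_apply, smul_eq_mul, mul_eq_zero, or_iff_right (inv_ne_zero hdet)]
  simp only [adjugate_fin_two, mul_apply, Fin.sum_univ_two, of_apply, cons_val', cons_val_one,
    cons_val_zero, empty_val', cons_val_fin_one]
  constructor <;> intro h <;> linear_combination h

lemma smul_mk_eq_mk_iff (a s g : GL (Fin 2) (ZMod p)) :
    a • (s : GL (Fin 2) (ZMod p) ⧸ Bplus p) = g ↔
      (a * s).1 0 0 * g.1 1 0 = g.1 0 0 * (a * s).1 1 0 :=
  QuotientGroup.eq.trans (inv_mul_mem_Bplus_iff _ _)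

def upperUnipotent (c : ZMod p) : GL (Fin 2) (ZMod p) :=
  GeneralLinearGroup.mkOfDetNeZero !![1, c; 0, 1] (by simp)

def weylElement : GL (Fin 2) (ZMod p) :=
  GeneralLinearGroup.mkOfDetNeZero !![0, 1; 1, 0] (by simp)

lemma upperUnipotent_mem_Bplus (c : ZMod p) : upperUnipotent c ∈ Bplus p := by
  simp [mem_Bplus_iff, upperUnipotent]

lemma weylElement_inv : (weylElement (p := p))⁻¹ = weylElement :=
  inv_eq_of_mul_eq_one_right <| GeneralLinearGroup.ext fun i j ↦ by
    fin_cases i <;> fin_cases j <;> simp [weylElement, mul_apply, Fin.sum_univ_two]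

lemma weylElement_conj_mem_Bplus {b : GL (Fin 2) (ZMod p)} (hb : b ∈ Bminus p) :
    weylElement⁻¹ * b * weylElement ∈ Bplus p := by
  rw [weylElement_inv, mem_Bplus_iff]
  simpa [weylElement, mul_apply, Fin.sum_univ_two, -cons_mul] using mem_Bminus_iff.mp hb

lemma mem_Bplus_sup_Bminus_of_ne_zero {g : GL (Fin 2) (ZMod p)} (hg : g.1 1 1 ≠ 0) :
    g ∈ Bplus p ⊔ Bminus p := by
  set u := upperUnipotent (-(g.1 0 1 / g.1 1 1))
  have hug : u * g ∈ Bminus p := by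
    simp [mem_Bminus_iff, u, upperUnipotent, mul_apply, Fin.sum_univ_two, hg]
  rw [show g = u⁻¹ * (u * g) by group]
  exact mul_mem (Subgroup.mem_sup_left (inv_mem (upperUnipotent_mem_Bplus _)))
    (Subgroup.mem_sup_right hug)

lemma Bplus_sup_Bminus : Bplus p ⊔ Bminus p = ⊤ := by
  refine eq_top_iff.mpr fun g _ ↦ ?_
  by_cases hg : g.1 1 1 = 0
  · set e := upperUnipotent (p := p) 1
    have hge : (g * e).1 1 1 ≠ 0 := by
      have hdet := (isUnits_det_units g).ne_zero
      simp_all [det_fin_two, e, upperUnipotent, mul_apply, Fin.sum_univ_two]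
    rw [show g = g * e * e⁻¹ by group]
    exact mul_mem (mem_Bplus_sup_Bminus_of_ne_zero hge)
      (Subgroup.mem_sup_left (inv_mem (upperUnipotent_mem_Bplus 1)))
  · exact mem_Bplus_sup_Bminus_of_ne_zero hg

/-- Their cosets are the points `∞`, `0`, `1` of `P¹ = G ⧸ B₊`, one in each orbit of `T`. -/
def torusOrbitRep : Fin 3 → GL (Fin 2) (ZMod p) :=
  ![1, weylElement, upperUnipotent 1 * weylElement]

lemma exists_Tsplit_smul_torusOrbitRep (x : GL (Fin 2) (ZMod p) ⧸ Bplus p) :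
    ∃ i, ∃ t : Tsplit p, (t : GL (Fin 2) (ZMod p)) •
      (torusOrbitRep (p := p) i : GL (Fin 2) (ZMod p) ⧸ Bplus p) = x := by
  obtain ⟨g, rfl⟩ := QuotientGroup.mk_surjective x
  by_cases h10 : g.1 1 0 = 0
  · exact ⟨0, 1, by rw [smul_mk_eq_mk_iff]; simp [torusOrbitRep, h10]⟩
  by_cases h00 : g.1 0 0 = 0
  · exact ⟨1, 1, by rw [smul_mk_eq_mk_iff]; simp [torusOrbitRep, h00, weylElement]⟩
  let t := GeneralLinearGroup.mkOfDetNeZero !![g.1 0 0, 0; 0, g.1 1 0] (by simp [h00, h10])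
  have ht : t ∈ Tsplit p := ⟨by simp [mem_Bplus_iff, t], by simp [mem_Bminus_iff, t]⟩
  refine ⟨2, ⟨t, ht⟩, ?_⟩
  rw [smul_mk_eq_mk_iff]
  simp [torusOrbitRep, t, upperUnipotent, weylElement, mul_apply, Fin.sum_univ_two, mul_comm]

theorem stmt_11_general
    (V : Type) [AddCommGroup V] [Module (AlgebraicClosure ℚ) V]
    [FiniteDimensional (AlgebraicClosure ℚ) V]
    (ρ : Representation (AlgebraicClosure ℚ) (GL (Fin 2) (ZMod p)) V)
    (hirr : IsSimpleModule
      (MonoidAlgebra (AlgebraicClosure ℚ) (GL (Fin 2) (ZMod p))) ρ.asModule)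
    (hdim : finrank (AlgebraicClosure ℚ) V = p)
    (hB : Representation.invariants (ρ.comp (Bplus p).subtype) ≠ ⊥) :
    finrank (AlgebraicClosure ℚ)
        (Representation.invariants (ρ.comp (Tsplit p).subtype)) = 2 ∧
    finrank (AlgebraicClosure ℚ)
        (Representation.invariants (ρ.comp (Bplus p).subtype)) = 1 ∧
    finrank (AlgebraicClosure ℚ)
        (Representation.invariants (ρ.comp (Bminus p).subtype)) = 1 ∧
    Representation.invariants (ρ.comp (Bplus p).subtype)
        ⊓ Representation.invariants (ρ.comp (Bminus p).subtype) = ⊥ ∧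
    Representation.invariants (ρ.comp (Bplus p).subtype)
        ⊔ Representation.invariants (ρ.comp (Bminus p).subtype)
      = Representation.invariants (ρ.comp (Tsplit p).subtype) := by
  classical
  have : ρ.IsIrreducible := (ρ.irreducible_iff_isSimpleModule_asModule).mpr hirr
  have : Invertible (Fintype.card (Tsplit p) : AlgebraicClosure ℚ) :=
    invertibleOfNonzero (Nat.cast_ne_zero.mpr Fintype.card_ne_zero)
  set Vp := Representation.invariants (ρ.comp (Bplus p).subtype)
  set Vm := Representation.invariants (ρ.comp (Bminus p).subtype)
  set VT := Representation.invariants (ρ.comp (Tsplit p).subtype)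
  have hG : Representation.invariants ρ = ⊥ := by
    by_contra h
    have := ρ.finrank_eq_one_of_invariants_ne_bot h
    have := (Fact.out : p.Prime).two_le
    omega
  obtain ⟨v, hv, hv0⟩ := (Submodule.ne_bot_iff _).mp hB
  have hVT : finrank (AlgebraicClosure ℚ) VT < 3 := by
    simpa using ρ.finrank_invariants_lt_card hG hv hv0 (K := Tsplit p) _
      exists_Tsplit_smul_torusOrbitRep
  have hVm : Vm ≠ ⊥ := (Submodule.ne_bot_iff _).mpr ⟨_,
    ρ.apply_mem_invariants_comp_subtype (fun _ ↦ weylElement_conj_mem_Bplus) hv,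
    fun h ↦ hv0 (by simpa using congrArg (ρ weylElement⁻¹) h)⟩
  have hinf : Vp ⊓ Vm = ⊥ :=
    le_bot_iff.mp ((ρ.invariants_inf_invariants_le Bplus_sup_Bminus).trans hG.le)
  have hsup : Vp ⊔ Vm ≤ VT := sup_le (fun w hw t ↦ hw ⟨t, t.2.1⟩) (fun w hw t ↦ hw ⟨t, t.2.2⟩)
  have hdim_sup := Submodule.finrank_sup_add_finrank_inf_eq Vp Vm
  rw [hinf, finrank_bot] at hdim_sup
  have := Submodule.one_le_finrank_iff.mpr hB
  have := Submodule.one_le_finrank_iff.mpr hVm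
  have := Submodule.finrank_mono hsup
  exact ⟨by omega, by omega, by omega, hinf, Submodule.eq_of_le_of_finrank_eq hsup (by omega)⟩

/-- Let `St` be the Steinberg representation of `GL₂(𝔽_p)` over `ℚ̄` (`p` odd), i.e. the
`p`-dimensional irreducible subrepresentation of `Ind_{B₊}^G 1` (characterized among
irreducible representations by having dimension `p` and a nonzero `B₊`-invariant vector).
Then `St^T` is `2`-dimensional, and is the direct sum of the `1`-dimensional spaces
`St^{B₊}` and `St^{B₋}`. -/
theorem stmt_11 (hp : Odd p)
    (V : Type) [AddCommGroup V] [Module (AlgebraicClosure ℚ) V]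
    [FiniteDimensional (AlgebraicClosure ℚ) V]
    (ρ : Representation (AlgebraicClosure ℚ) (GL (Fin 2) (ZMod p)) V)
    (hirr : IsSimpleModule
      (MonoidAlgebra (AlgebraicClosure ℚ) (GL (Fin 2) (ZMod p))) ρ.asModule)
    (hdim : finrank (AlgebraicClosure ℚ) V = p)
    (hB : Representation.invariants (ρ.comp (Bplus p).subtype) ≠ ⊥) :
    finrank (AlgebraicClosure ℚ)
        (Representation.invariants (ρ.comp (Tsplit p).subtype)) = 2 ∧
    finrank (AlgebraicClosure ℚ)
        (Representation.invariants (ρ.comp (Bplus p).subtype)) = 1 ∧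
    finrank (AlgebraicClosure ℚ)
        (Representation.invariants (ρ.comp (Bminus p).subtype)) = 1 ∧
    Representation.invariants (ρ.comp (Bplus p).subtype)
        ⊓ Representation.invariants (ρ.comp (Bminus p).subtype) = ⊥ ∧
    Representation.invariants (ρ.comp (Bplus p).subtype)
        ⊔ Representation.invariants (ρ.comp (Bminus p).subtype)
      = Representation.invariants (ρ.comp (Tsplit p).subtype) :=
  stmt_11_general V ρ hirr hdim hB
end

section
/- Let p be an odd prime and G = GL₂(F_p). Let St be the Steinberg representation over ℚ̄ and T' ⊂ G a non-split maximal torus (≅ F_{p²}^×). Then the space of T'-invariants St^{T'} is zero. -/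
/-!
Multiplication by `𝔽_{p²}^×` is transitive on the nonzero vectors of `𝔽_{p²} ≅ 𝔽_p²`, so `T'`
acts transitively on `ℙ¹(𝔽_p) = G/B₊`, i.e. `G = T'B₊`. For a `B₊`-fixed vector `v` the
`T'`-average `N` therefore satisfies `N(gv) = N(v)` for all `g`, and summing over `G` gives
`|G| N(v) = N(∑_g gv) = 0`, since a nontrivial irreducible representation has no `G`-fixed
vectors. The vectors `gv` span `St`, so `N = 0`; but `N` is multiplication by `|T'|` on `St^{T'}`.
-/

open Module Matrix

variable (p : ℕ) [Fact p.Prime]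

namespace Representation

variable {k G V : Type*} [Field k] [Group G] [AddCommGroup V] [Module k V]
  (ρ : Representation k G V)

theorem span_range_apply_eq_top [IsIrreducible ρ] {v : V} (hv : v ≠ 0) :
    Submodule.span k (Set.range fun g : G => ρ g v) = ⊤ := by
  let W : Subrepresentation ρ :=
    { toSubmodule := Submodule.span k (Set.range fun g : G => ρ g v)
      apply_mem_toSubmodule := fun g => by
        refine Submodule.span_le (p := (Submodule.span k _).comap (ρ g)) |>.mpr ?_
        rintro _ ⟨h, rfl⟩
        exact Submodule.subset_span ⟨g * h, by simp⟩ }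
  have hW : W ≠ ⊥ := fun h => hv <| by
    have : v ∈ W := Submodule.subset_span ⟨1, by simp⟩
    rwa [h] at this
  exact congrArg Subrepresentation.toSubmodule ((eq_bot_or_eq_top W).resolve_left hW)

theorem invariants_eq_bot_of_finrank_ne_one [IsIrreducible ρ] (h : Module.finrank k V ≠ 1) :
    invariants ρ = ⊥ := by
  refine (Submodule.eq_bot_iff _).mpr fun v hv => by_contra fun hv0 => h ?_
  let W : Subrepresentation ρ :=
    { toSubmodule := k ∙ v
      apply_mem_toSubmodule := fun g x hx => by
        obtain ⟨c, rfl⟩ := Submodule.mem_span_singleton.mp hx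
        rw [map_smul, hv g]
        exact Submodule.smul_mem _ c (Submodule.mem_span_singleton_self v) }
  have hW : W ≠ ⊥ := fun h => hv0 <| by
    have : v ∈ W := Submodule.mem_span_singleton_self v
    rwa [h] at this
  have hspan : (k ∙ v) = ⊤ :=
    congrArg Subrepresentation.toSubmodule ((eq_bot_or_eq_top W).resolve_left hW)
  rw [← finrank_top k V, ← hspan, finrank_span_singleton hv0]

theorem norm_apply_of_mem_invariants [Fintype G] {v : V} (hv : v ∈ invariants ρ) :
    ρ.norm v = Fintype.card G • v := by
  rw [Representation.norm, LinearMap.sum_apply, Finset.sum_congr rfl fun g _ => hv g,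
    Finset.sum_const, Finset.card_univ]

section Subgroups

variable {H K : Subgroup G}

theorem norm_comp_subtype_apply_eq [Fintype H] (hHK : ∀ g : G, ∃ h ∈ H, h⁻¹ * g ∈ K) {v : V}
    (hv : v ∈ invariants (ρ.comp K.subtype)) (g : G) :
    Representation.norm (ρ.comp H.subtype) (ρ g v) = Representation.norm (ρ.comp H.subtype) v := by
  obtain ⟨h, hH, hK⟩ := hHK g
  have hg : ρ g v = ρ.comp H.subtype ⟨h, hH⟩ v :=
    calc ρ g v = ρ h (ρ (h⁻¹ * g) v) := by
          rw [← Module.End.mul_apply, ← map_mul, mul_inv_cancel_left]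
      _ = ρ h v := congrArg (ρ h) (hv ⟨_, hK⟩)
  rw [hg, norm_self_apply]

theorem norm_comp_subtype_eq_zero [Fintype G] [Fintype H] [CharZero k] (hG : invariants ρ = ⊥)
    (hHK : ∀ g : G, ∃ h ∈ H, h⁻¹ * g ∈ K) {v : V} (hv : v ∈ invariants (ρ.comp K.subtype)) :
    Representation.norm (ρ.comp H.subtype) v = 0 := by
  have hnorm : ρ.norm v = 0 := by
    rw [← Submodule.mem_bot k, ← hG]
    exact fun g => self_norm_apply ρ g v
  have : (Fintype.card G : k) • Representation.norm (ρ.comp H.subtype) v = 0 :=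
    calc (Fintype.card G : k) • Representation.norm (ρ.comp H.subtype) v
        = ∑ g : G, Representation.norm (ρ.comp H.subtype) (ρ g v) := by
          simp_rw [norm_comp_subtype_apply_eq ρ hHK hv]
          rw [Finset.sum_const, Finset.card_univ, Nat.cast_smul_eq_nsmul]
      _ = Representation.norm (ρ.comp H.subtype) (ρ.norm v) := by
          rw [← map_sum]; exact congrArg _ (LinearMap.sum_apply _ _ _).symm
      _ = 0 := by rw [hnorm, map_zero]
  exact (smul_eq_zero.mp this).resolve_left (Nat.cast_ne_zero.mpr Fintype.card_ne_zero)

theorem invariants_comp_subtype_eq_bot [Finite G] [CharZero k] [IsIrreducible ρ]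
    (hG : invariants ρ = ⊥) (hHK : ∀ g : G, ∃ h ∈ H, h⁻¹ * g ∈ K)
    (hK : invariants (ρ.comp K.subtype) ≠ ⊥) : invariants (ρ.comp H.subtype) = ⊥ := by
  have := Fintype.ofFinite G
  have := Fintype.ofFinite H
  obtain ⟨v, hv, hv0⟩ := (Submodule.ne_bot_iff _).mp hK
  have hnorm : Representation.norm (ρ.comp H.subtype) = 0 :=
    LinearMap.ext_on_range (span_range_apply_eq_top ρ hv0) fun g => by
      rw [norm_comp_subtype_apply_eq ρ hHK hv, norm_comp_subtype_eq_zero ρ hG hHK hv,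
        LinearMap.zero_apply]
  refine (Submodule.eq_bot_iff _).mpr fun u hu => ?_
  have hcard : (Fintype.card H : k) • u = 0 := by
    rw [Nat.cast_smul_eq_nsmul, ← norm_apply_of_mem_invariants _ hu, hnorm, LinearMap.zero_apply]
  exact (smul_eq_zero.mp hcard).resolve_left (Nat.cast_ne_zero.mpr Fintype.card_ne_zero)

end Subgroups

end Representation

theorem torusHom_mulVec_repr (b : Basis (Fin 2) (ZMod p) (GaloisField p 2))
    (z : (GaloisField p 2)ˣ) (y : GaloisField p 2) :
    (torusHom p b z : Matrix (Fin 2) (Fin 2) (ZMod p)) *ᵥ b.repr y = b.repr (z * y) :=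
  LinearMap.toMatrix_mulVec_repr b b _ y

theorem exists_mem_Tnonsplit_inv_mul_mem_Bplus (b : Basis (Fin 2) (ZMod p) (GaloisField p 2))
    (g : GL (Fin 2) (ZMod p)) : ∃ t ∈ Tnonsplit p b, t⁻¹ * g ∈ Bplus p := by
  set x : GaloisField p 2 := b.equivFun.symm fun i => (g : Matrix (Fin 2) (Fin 2) (ZMod p)) i 0
  have hcol : (fun i => (g : Matrix (Fin 2) (Fin 2) (ZMod p)) i 0) = b.repr x := by
    rw [← Basis.equivFun_apply, LinearEquiv.apply_symm_apply]
  have hx : x ≠ 0 := fun hx => ((Matrix.isUnit_iff_isUnit_det _).mp g.isUnit).ne_zero <|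
    Matrix.det_eq_zero_of_column_eq_zero 0 fun i => by simpa [hx] using congrFun hcol i
  let z : (GaloisField p 2)ˣ := Units.mk0 (x * (b 0)⁻¹) (mul_ne_zero hx (inv_ne_zero (b.ne_zero 0)))
  refine ⟨torusHom p b z, ⟨z, rfl⟩, ?_⟩
  have hzx : ((z⁻¹ : (GaloisField p 2)ˣ) : GaloisField p 2) * x = b 0 := by
    rw [Units.val_inv_eq_inv_val, Units.val_mk0]
    field_simp [hx, b.ne_zero 0]
  show ((torusHom p b z⁻¹ : Matrix (Fin 2) (Fin 2) (ZMod p)) *ᵥ fun i => g.val i 0) 1 = 0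
  rw [hcol, torusHom_mulVec_repr, hzx, b.repr_self, Finsupp.single_eq_of_ne one_ne_zero]

theorem stmt_12 (b : Basis (Fin 2) (ZMod p) (GaloisField p 2))
    (V : Type) [AddCommGroup V] [Module (AlgebraicClosure ℚ) V]
    (ρ : Representation (AlgebraicClosure ℚ) (GL (Fin 2) (ZMod p)) V)
    (hirr : IsSimpleModule
      (MonoidAlgebra (AlgebraicClosure ℚ) (GL (Fin 2) (ZMod p))) ρ.asModule)
    (hdim : finrank (AlgebraicClosure ℚ) V = p)
    (hB : Representation.invariants (ρ.comp (Bplus p).subtype) ≠ ⊥) :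
    Representation.invariants (ρ.comp (Tnonsplit p b).subtype) = ⊥ := by
  have := (Representation.irreducible_iff_isSimpleModule_asModule ρ).mpr hirr
  have hrank : finrank (AlgebraicClosure ℚ) V ≠ 1 := hdim ▸ (Fact.out : p.Prime).one_lt.ne'
  exact ρ.invariants_comp_subtype_eq_bot (ρ.invariants_eq_bot_of_finrank_ne_one hrank)
    (exists_mem_Tnonsplit_inv_mul_mem_Bplus p b) hB
end

section
/- Let p be an odd prime, G = GL₂(F_p), T' a non-split maximal torus and B₊ the Borel subgroup of upper triangular matrices. Then T'·B₊ = G, i.e., every element of G is a product of an element of T' and an element of B₊. -/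
open Module Matrix

variable (p : ℕ) [Fact p.Prime]

open scoped Pointwise in
/-- `T'·B₊ = G`: every element of `GL₂(𝔽_p)` (`p` odd) is the product of an element of the
non-split torus `T'` and an upper triangular matrix. -/
theorem stmt_13 (hp : Odd p) (b : Basis (Fin 2) (ZMod p) (GaloisField p 2)) :
    ((Tnonsplit p b : Set (GL (Fin 2) (ZMod p))) * (Bplus p : Set (GL (Fin 2) (ZMod p))))
      = Set.univ := by
  ext g
  simp only [Set.mem_univ, iff_true]
  -- `GaloisField p 2` is a field, so we can divide
  set M : Matrix (Fin 2) (Fin 2) (ZMod p) := (g : Matrix (Fin 2) (Fin 2) (ZMod p)) with hM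
  -- the first column of `g` is nonzero
  have hcol : ¬ (∀ i, M i 0 = 0) := by
    intro h
    have h1 : ((g⁻¹ * g : GL (Fin 2) (ZMod p)) : Matrix (Fin 2) (Fin 2) (ZMod p)) 0 0 = 1 := by
      rw [inv_mul_cancel]
      simp [Matrix.one_apply]
    rw [Units.val_mul, Matrix.mul_apply, Fin.sum_univ_two, ← hM, h 0, h 1] at h1
    simp at h1
  set w : GaloisField p 2 := ∑ i, M i 0 • b i with hw
  have hwrepr : ∀ i, b.repr w i = M i 0 := by
    intro i
    rw [hw, b.repr_sum_self]
  have hwne : w ≠ 0 := by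
    intro h
    apply hcol
    intro i
    rw [← hwrepr i, h, map_zero]
    rfl
  have hb0 : (b 0 : GaloisField p 2) ≠ 0 := b.ne_zero 0
  set z : GaloisField p 2 := w * (b 0)⁻¹ with hz
  have hzne : z ≠ 0 := mul_ne_zero hwne (inv_ne_zero hb0)
  set t : GL (Fin 2) (ZMod p) := torusHom p b (Units.mk0 z hzne) with ht
  have htT : t ∈ Tnonsplit p b := ⟨Units.mk0 z hzne, rfl⟩
  -- the matrix of `t`
  have htmat : ∀ i j, (t : Matrix (Fin 2) (Fin 2) (ZMod p)) i j
      = b.repr (z * b j) i := by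
    intro i j
    rw [ht]
    show (LinearMap.toMatrixAlgEquiv b ((Algebra.lmul (ZMod p) (GaloisField p 2)) z)) i j = _
    rw [LinearMap.toMatrixAlgEquiv_apply]
    rfl
  have htcol : ∀ i, (t : Matrix (Fin 2) (Fin 2) (ZMod p)) i 0 = M i 0 := by
    intro i
    rw [htmat, hz, mul_assoc, inv_mul_cancel₀ hb0, mul_one, hwrepr]
  refine ⟨t, htT, t⁻¹ * g, ?_, by group⟩
  show ((t⁻¹ * g : GL (Fin 2) (ZMod p)) : Matrix (Fin 2) (Fin 2) (ZMod p)) 1 0 = 0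
  have key : ((t⁻¹ * t : GL (Fin 2) (ZMod p)) : Matrix (Fin 2) (Fin 2) (ZMod p)) 1 0 = 0 := by
    rw [inv_mul_cancel]
    simp [Matrix.one_apply]
  rw [Units.val_mul, Matrix.mul_apply, Fin.sum_univ_two] at key ⊢
  rw [← hM, ← htcol 0, ← htcol 1]
  exact key
end

section
/- Let p be an odd prime, G = GL₂(F_p), and V the cuspidal representation π(Λ) with Λ^p ≠ Λ. Let T' ≅ F_{p²}^× be a non-split torus. Then dim V^{T'} = δ(Λ^{p+1}, 1), i.e., V has a nonzero T'-fixed vector (necessarily a 1-dimensional space) if and only if Λ is trivial on F_p^× ⊂ F_{p²}^×. -/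
open Module Matrix

variable (p : ℕ) [Fact p.Prime]

section StmtAux

open Finset

private lemma stmt16_aux_finrank {k G W : Type*} [Field k] [Group G] [Fintype G]
    [Invertible (Fintype.card G : k)] [AddCommGroup W] [Module k W]
    [FiniteDimensional k W] (ρ : Representation k G W) :
    ((finrank k ρ.invariants : k)) =
      ⅟(Fintype.card G : k) • ∑ g : G, LinearMap.trace k W (ρ g) := by
  rw [← (Representation.isProj_averageMap ρ).trace]
  simp [GroupAlgebra.average, _root_.map_sum]

private lemma stmt16_shift_sum {k G : Type*} [Field k] [CommGroup G] (f : G →* kˣ)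
    (s : Finset G) (a : G) (hs : ∀ z, z ∈ s ↔ a * z ∈ s) (ha : (f a : k) ≠ 1) :
    ∑ z ∈ s, (f z : k) = 0 := by
  have h1 : ∑ z ∈ s, ((f (a * z) : k)) = ∑ z ∈ s, (f z : k) := by
    refine Finset.sum_nbij' (fun z => a * z) (fun z => a⁻¹ * z) ?_ ?_ ?_ ?_ ?_ <;>
      intro z hz
    · exact (hs z).1 hz
    · have := (hs (a⁻¹ * z)).2; simp only [mul_inv_cancel_left] at this; exact this hz
    · simp
    · simp
    · rfl
  have h2 : ∑ z ∈ s, ((f (a * z) : k)) = (f a : k) * ∑ z ∈ s, (f z : k) := by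
    rw [Finset.mul_sum]
    exact Finset.sum_congr rfl fun z _ => by rw [_root_.map_mul]; push_cast; ring
  have h3 : ((f a : k) - 1) * ∑ z ∈ s, (f z : k) = 0 := by
    rw [sub_mul, one_mul, ← h2, h1, sub_self]
  exact (mul_eq_zero.mp h3).resolve_left (sub_ne_zero.mpr ha)

private lemma stmt16_fact (hp2 : 2 ≤ p) : (p + 1) * (p - 1) = p ^ 2 - 1 := by
  obtain ⟨m, rfl⟩ : ∃ m, p = m + 1 := ⟨p - 1, by omega⟩
  have : (m + 1) ^ 2 = (m + 1 + 1) * m + 1 := by ring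
  simp only [Nat.add_sub_cancel]
  omega

private lemma stmt16_cyclic_facts :
    ∃ h : (GaloisField p 2)ˣ,
      (∀ z : (GaloisField p 2)ˣ, z ^ (p - 1) = 1 ↔ z ∈ Subgroup.zpowers h) ∧
      (∀ z : (GaloisField p 2)ˣ, z ∈ Subgroup.zpowers h → ∃ w : (GaloisField p 2)ˣ,
        w ^ (p + 1) = z) ∧
      orderOf h = p - 1 := by
  haveI : Fintype (GaloisField p 2) := Fintype.ofFinite _
  haveI : Fintype (GaloisField p 2)ˣ := Fintype.ofFinite _
  have hp2 : 2 ≤ p := (Fact.out : p.Prime).two_le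
  have hcardU : Nat.card (GaloisField p 2)ˣ = p ^ 2 - 1 := by
    rw [Nat.card_units, GaloisField.card p 2 (by norm_num)]
  obtain ⟨g, hg⟩ := IsCyclic.exists_generator (α := (GaloisField p 2)ˣ)
  have hordg : orderOf g = p ^ 2 - 1 := by
    rw [orderOf_eq_card_of_forall_mem_zpowers hg, hcardU]
  have hfact := stmt16_fact p hp2
  refine ⟨g ^ (p + 1), ?_, ?_, ?_⟩
  · intro z
    constructor
    · intro hz
      obtain ⟨m, hm⟩ := mem_powers_iff_mem_zpowers.mpr (hg z)
      simp only at hm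
      have h1 : g ^ (m * (p - 1)) = 1 := by rw [pow_mul, hm, hz]
      have hd : p ^ 2 - 1 ∣ m * (p - 1) := hordg ▸ orderOf_dvd_of_pow_eq_one h1
      rw [← hfact] at hd
      have hp1 : (p + 1) ∣ m :=
        (Nat.mul_dvd_mul_iff_right (show 0 < p - 1 by omega)).mp hd
      obtain ⟨t, rfl⟩ := hp1
      have hzz : z = (g ^ (p + 1)) ^ t := by rw [← pow_mul, hm]
      rw [hzz]
      exact Subgroup.pow_mem _ (Subgroup.mem_zpowers _) t
    · rintro ⟨n, rfl⟩
      have hone : (g ^ (p + 1)) ^ (p - 1) = 1 := by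
        rw [← pow_mul, hfact, ← hordg, pow_orderOf_eq_one]
      rw [← zpow_natCast ((g ^ (p + 1)) ^ n) (p - 1), ← _root_.zpow_mul, mul_comm, _root_.zpow_mul,
        zpow_natCast, hone, _root_.one_zpow]
  · rintro z ⟨n, rfl⟩
    refine ⟨g ^ n, ?_⟩
    rw [← zpow_natCast (g ^ n) (p + 1), ← _root_.zpow_mul, mul_comm, _root_.zpow_mul, zpow_natCast]
  · rw [orderOf_pow, hordg, Nat.gcd_eq_right ⟨p - 1, hfact.symm⟩, ← hfact,
      Nat.mul_div_cancel_left _ (by omega)]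

end StmtAux

open scoped Classical in
/-- For the cuspidal representation `V = π(Λ)` of `GL₂(𝔽_p)` (`p` odd) attached to a
character `Λ` of `𝔽_{p²}^×` with `Λ^p ≠ Λ`, and `T' ≅ 𝔽_{p²}^×` a non-split torus,
one has `dim V^{T'} = δ(Λ^{p+1},1)`: there is a (necessarily `1`-dimensional space of)
nonzero `T'`-fixed vector(s) iff the character `z ↦ Λ(z^{p+1})` is trivial.

The representation is encoded by its character values on `T'` (see the character table):
`z ∈ T'` is central iff `z^p = z`, where `χ = (p−1)Λ(z)`, and elliptic otherwise,
where `χ = −Λ(z) − Λ(z^p)`. -/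
theorem stmt_16 (hp : Odd p) (b : Basis (Fin 2) (ZMod p) (GaloisField p 2))
    (V : Type) [AddCommGroup V] [Module (AlgebraicClosure ℚ) V]
    [FiniteDimensional (AlgebraicClosure ℚ) V]
    (ρ : Representation (AlgebraicClosure ℚ) (GL (Fin 2) (ZMod p)) V)
    (Λ : (GaloisField p 2)ˣ →* (AlgebraicClosure ℚ)ˣ)
    (hΛ : ∃ z : (GaloisField p 2)ˣ, Λ (z ^ p) ≠ Λ z)
    (χ : GL (Fin 2) (ZMod p) → AlgebraicClosure ℚ)
    (hχ : ∀ g, χ g = LinearMap.trace (AlgebraicClosure ℚ) V (ρ g))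
    (hcent : ∀ z : (GaloisField p 2)ˣ, (z : GaloisField p 2) ^ p = z →
      χ (torusHom p b z) = ((p : AlgebraicClosure ℚ) - 1) * Λ z)
    (hell : ∀ z : (GaloisField p 2)ˣ, (z : GaloisField p 2) ^ p ≠ z →
      χ (torusHom p b z) = -(Λ z : AlgebraicClosure ℚ) - Λ (z ^ p)) :
    finrank (AlgebraicClosure ℚ)
        (Representation.invariants (ρ.comp (Tnonsplit p b).subtype))
      = if ∀ z : (GaloisField p 2)ˣ, Λ z ^ (p + 1) = 1 then 1 else 0 := by
  classical
  haveI : Fintype (GaloisField p 2) := Fintype.ofFinite _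
  haveI : Fintype (GaloisField p 2)ˣ := Fintype.ofFinite _
  haveI : Fintype ↥(Tnonsplit p b) := Fintype.ofFinite _
  have hp2 : 2 ≤ p := (Fact.out : p.Prime).two_le
  have hfact := stmt16_fact p hp2
  have hp21 : p ^ 2 - 1 ≠ 0 := by
    have := Nat.pow_le_pow_left hp2 2
    omega
  have hcardK : Fintype.card (GaloisField p 2) = p ^ 2 := by
    rw [← Nat.card_eq_fintype_card]; exact GaloisField.card p 2 (by norm_num)
  have hcardU : Nat.card (GaloisField p 2)ˣ = p ^ 2 - 1 := by
    rw [Nat.card_units, GaloisField.card p 2 (by norm_num)]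
  have hinj : Function.Injective (torusHom p b) :=
    Units.map_injective (RingHom.injective _)
  -- the equivalence between `𝔽_{p²}ˣ` and the nonsplit torus
  have hsurj : ∀ t : ↥(Tnonsplit p b), ∃ z, torusHom p b z = (t : GL (Fin 2) (ZMod p)) :=
    fun t => t.2
  let e : (GaloisField p 2)ˣ ≃ ↥(Tnonsplit p b) :=
    Equiv.ofBijective (fun z => (⟨torusHom p b z, ⟨z, rfl⟩⟩ : ↥(Tnonsplit p b)))
      ⟨fun x y hxy => hinj (congrArg Subtype.val hxy),
       fun t => (hsurj t).imp fun z hz => Subtype.ext hz⟩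
  have hcardT : Fintype.card ↥(Tnonsplit p b) = p ^ 2 - 1 := by
    rw [← Fintype.card_congr e, ← Nat.card_eq_fintype_card, hcardU]
  have hNe : ((Fintype.card ↥(Tnonsplit p b) : AlgebraicClosure ℚ)) ≠ 0 := by
    rw [hcardT]
    exact_mod_cast Nat.cast_ne_zero.mpr hp21
  haveI : Invertible ((Fintype.card ↥(Tnonsplit p b) : AlgebraicClosure ℚ)) :=
    invertibleOfNonzero hNe
  have key := stmt16_aux_finrank (ρ.comp (Tnonsplit p b).subtype)
  have hkey2 : ∑ t : ↥(Tnonsplit p b),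
      LinearMap.trace (AlgebraicClosure ℚ) V ((ρ.comp (Tnonsplit p b).subtype) t)
      = ∑ z : (GaloisField p 2)ˣ, χ (torusHom p b z) :=
    (Fintype.sum_equiv e (fun z => χ (torusHom p b z))
      (fun t => LinearMap.trace (AlgebraicClosure ℚ) V ((ρ.comp (Tnonsplit p b).subtype) t))
      (fun z => by show χ (torusHom p b z) = _; rw [hχ]; rfl)).symm
  rw [hkey2] at key
  -- abbreviations
  set L : (GaloisField p 2)ˣ → AlgebraicClosure ℚ := fun z => ((Λ z : (AlgebraicClosure ℚ)ˣ) : AlgebraicClosure ℚ) with hL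
  obtain ⟨h, hmemH, hpowH, hordh⟩ := stmt16_cyclic_facts p
  have hcoU : ∀ z : (GaloisField p 2)ˣ,
      ((z : GaloisField p 2) ^ p = (z : GaloisField p 2)) ↔ z ^ p = z := fun z => by
    rw [Units.ext_iff, Units.val_pow_eq_pow_val]
  have hQ : ∀ z : (GaloisField p 2)ˣ,
      ((z : GaloisField p 2) ^ p = (z : GaloisField p 2)) ↔ z ^ (p - 1) = 1 := by
    intro z
    rw [hcoU z]
    constructor
    · intro hz
      have h4 := pow_sub_one_mul (show p ≠ 0 by omega) z
      rw [hz] at h4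
      have h5 : z ^ (p - 1) * z = 1 * z := by rw [h4, one_mul]
      exact mul_right_cancel h5
    · intro hz
      rw [← pow_sub_one_mul (show p ≠ 0 by omega) z, hz, one_mul]
  have hfrobU : ∀ z : (GaloisField p 2)ˣ, (z ^ p) ^ p = z := by
    intro z
    apply Units.ext
    have := FiniteField.pow_card (z : GaloisField p 2)
    rw [hcardK] at this
    simp only [Units.val_pow_eq_pow_val, ← pow_mul, ← pow_two]
    exact this
  -- split the sum over central and elliptic elements
  have hsplit := (Finset.sum_filter_add_sum_filter_not Finset.univ
    (fun z : (GaloisField p 2)ˣ => (z : GaloisField p 2) ^ p = z)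
    (fun z => χ (torusHom p b z)))
  set Hf := Finset.univ.filter
    (fun z : (GaloisField p 2)ˣ => (z : GaloisField p 2) ^ p = z) with hHf
  set Hc := Finset.univ.filter
    (fun z : (GaloisField p 2)ˣ => ¬(z : GaloisField p 2) ^ p = z) with hHc
  have hc : ∑ z ∈ Hf, χ (torusHom p b z) = ((p : AlgebraicClosure ℚ) - 1) * ∑ z ∈ Hf, L z := by
    rw [Finset.mul_sum]
    refine Finset.sum_congr rfl fun z hz => ?_
    rw [hcent z (Finset.mem_filter.mp hz).2]
  have hB' : ∑ z ∈ Hc, L (z ^ p) = ∑ z ∈ Hc, L z := by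
    have hstep : ∀ z : (GaloisField p 2)ˣ, z ∈ Hc → z ^ p ∈ Hc := by
      intro z hz
      rw [hHc, Finset.mem_filter] at hz ⊢
      refine ⟨Finset.mem_univ _, fun hcon => hz.2 ?_⟩
      rw [hcoU] at hcon
      exact (hcoU z).mpr (((hfrobU z).symm.trans hcon).symm)
    refine Finset.sum_nbij' (fun z => z ^ p) (fun z => z ^ p)
      hstep hstep (fun z _ => hfrobU z) (fun z _ => hfrobU z) (fun z _ => rfl)
  have he : ∑ z ∈ Hc, χ (torusHom p b z) = -(2 * ∑ z ∈ Hc, L z) := by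
    have : ∀ z ∈ Hc, χ (torusHom p b z) = -(L z) - L (z ^ p) := by
      intro z hz
      exact hell z (Finset.mem_filter.mp hz).2
    rw [Finset.sum_congr rfl this, Finset.sum_sub_distrib, Finset.sum_neg_distrib, hB']
    ring
  have hall : ∑ z : (GaloisField p 2)ˣ, L z = 0 := by
    obtain ⟨z1, hz1⟩ := hΛ
    have hex : ∃ z₀, Λ z₀ ≠ 1 := by
      by_contra hno
      push_neg at hno
      exact hz1 (by rw [hno, hno])
    obtain ⟨z₀, hz₀⟩ := hex
    refine stmt16_shift_sum Λ Finset.univ z₀ (by simp) fun hcon => hz₀ ?_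
    exact Units.ext (by rw [hcon, Units.val_one])
  have hAB : ∑ z ∈ Hf, L z + ∑ z ∈ Hc, L z = 0 := by
    rw [hHf, hHc, Finset.sum_filter_add_sum_filter_not]
    exact hall
  have hS : ∑ z : (GaloisField p 2)ˣ, χ (torusHom p b z)
      = ((p : AlgebraicClosure ℚ) + 1) * ∑ z ∈ Hf, L z := by
    rw [← hsplit, hc, he]
    have : ∑ z ∈ Hc, L z = -∑ z ∈ Hf, L z := eq_neg_of_add_eq_zero_right hAB
    rw [this]
    ring
  rw [hS] at key
  by_cases hδ : ∀ z : (GaloisField p 2)ˣ, Λ z ^ (p + 1) = 1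
  · rw [if_pos hδ]
    have hA : ∑ z ∈ Hf, L z = ((p - 1 : ℕ) : AlgebraicClosure ℚ) := by
      have hone : ∀ z ∈ Hf, L z = 1 := by
        intro z hz
        have hzH : z ∈ Subgroup.zpowers h :=
          (hmemH z).1 ((hQ z).1 (Finset.mem_filter.mp hz).2)
        obtain ⟨w, hw⟩ := hpowH z hzH
        have : Λ z = 1 := by rw [← hw, map_pow, hδ w]
        rw [hL]; simp only [this, Units.val_one]
      rw [Finset.sum_congr rfl hone, Finset.sum_const, nsmul_eq_mul, mul_one]
      congr 1
      have hHfR : Hf = Finset.univ.filter (fun z : (GaloisField p 2)ˣ => z ^ (p - 1) = 1) :=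
        Finset.filter_congr fun z _ => hQ z
      rw [hHfR]
      calc (Finset.univ.filter (fun z : (GaloisField p 2)ˣ => z ^ (p - 1) = 1)).card
          = Fintype.card {z : (GaloisField p 2)ˣ // z ^ (p - 1) = 1} :=
            (Fintype.card_subtype _).symm
        _ = Nat.card {z : (GaloisField p 2)ˣ // z ^ (p - 1) = 1} :=
            Nat.card_eq_fintype_card.symm
        _ = Nat.card (Subgroup.zpowers h) := Nat.card_congr (Equiv.subtypeEquivRight hmemH)
        _ = orderOf h := Nat.card_zpowers h
        _ = p - 1 := hordh
    rw [hA] at key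
    have hSc : ((p : AlgebraicClosure ℚ) + 1) * ((p - 1 : ℕ) : AlgebraicClosure ℚ)
        = ((Fintype.card ↥(Tnonsplit p b) : ℕ) : AlgebraicClosure ℚ) := by
      rw [hcardT, ← hfact]
      push_cast [Nat.cast_sub (show 1 ≤ p by omega)]
      ring
    rw [hSc, smul_eq_mul, invOf_mul_self] at key
    exact_mod_cast key
  · rw [if_neg hδ]
    push_neg at hδ
    obtain ⟨w, hw⟩ := hδ
    have haQ : (w ^ (p + 1)) ^ (p - 1) = 1 := by
      rw [← pow_mul, hfact, ← hcardU]
      exact pow_card_eq_one'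
    have hA0 : ∑ z ∈ Hf, L z = 0 := by
      refine stmt16_shift_sum Λ Hf (w ^ (p + 1)) ?_ ?_
      · intro z
        rw [hHf, Finset.mem_filter, Finset.mem_filter]
        rw [hQ z, hQ (w ^ (p + 1) * z)]
        rw [mul_pow, haQ, one_mul]
        simp
      · intro hcon
        refine hw (Units.ext ?_)
        rw [Units.val_pow_eq_pow_val, Units.val_one]
        calc ((Λ w : (AlgebraicClosure ℚ)ˣ) : AlgebraicClosure ℚ) ^ (p + 1)
            = ((Λ w ^ (p + 1) : (AlgebraicClosure ℚ)ˣ) : AlgebraicClosure ℚ) :=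
              (Units.val_pow_eq_pow_val _ _).symm
          _ = ((Λ (w ^ (p + 1)) : (AlgebraicClosure ℚ)ˣ) : AlgebraicClosure ℚ) := by
              rw [map_pow]
          _ = 1 := hcon
    rw [hA0, mul_zero, smul_zero] at key
    exact_mod_cast key
end

section
/- Let p be an odd prime, G = GL₂(F_p), and V = V(α,β) the principal series representation π(α,β) with α ≠ β, of dimension p+1. Let T be the diagonal torus and T' a non-split torus. Then dim V^T = dim V^{T'} = δ(αβ, 1). -/
open Module Matrix

variable (p : ℕ) [Fact p.Prime]

/-- The diagonal matrix `diag(x,y)` as an element of `GL₂(R)`. -/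
def diagGL {R : Type*} [CommRing R] (x y : Rˣ) : GL (Fin 2) R :=
  ⟨Matrix.diagonal ![(x : R), y], Matrix.diagonal ![((x⁻¹ : Rˣ) : R), ((y⁻¹ : Rˣ) : R)],
   by
    rw [Matrix.diagonal_mul_diagonal]
    convert Matrix.diagonal_one with i
    fin_cases i <;> simp,
   by
    rw [Matrix.diagonal_mul_diagonal]
    convert Matrix.diagonal_one with i
    fin_cases i <;> simp⟩

/-! `dim V^H` is the average of the character over `H`. On `T`, writing
`χ(diag(x,y)) = α(x)β(y) + α(y)β(x) + [x = y](p-1)α(x)β(x)`, the sum over `T` is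
`2(∑α)(∑β) + (p-1)∑αβ`, and `(∑α)(∑β) = 0` because `α ≠ β` are not both trivial.
On `T' ≅ 𝔽_{p²}ˣ` the character vanishes off the Frobenius-fixed elements, i.e. off the
scalars `𝔽_pˣ`, so the sum over `T'` is `(p+1)∑αβ`. Since `∑αβ = (p-1)δ(αβ,1)`, `|T| = (p-1)²`
and `|T'| = (p+1)(p-1)`, both averages equal `δ(αβ,1)`. -/

open Finset

theorem Representation.finrank_invariants_eq_of_sum_character {k G V : Type*} [Field k]
    [CharZero k] [Group G] [Fintype G] [AddCommGroup V] [Module k V] [FiniteDimensional k V]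
    (ρ : Representation k G V) {n : ℕ} (h : ∑ g, ρ.character g = Nat.card G * n) :
    finrank k ρ.invariants = n := by
  have hG : (Nat.card G : k) ≠ 0 := Nat.cast_ne_zero.2 Nat.card_pos.ne'
  let _ : Invertible (Nat.card G : k) := invertibleOfNonzero hG
  have := ρ.card_inv_mul_sum_char_eq_finrank
  rw [h, inv_mul_cancel_left₀ hG] at this
  exact_mod_cast this.symm

theorem Subgroup.sum_eq_sum_of_eq_range {G H M : Type*} [Group G] [Fintype G] [Group H]
    [AddCommMonoid M] {f : G →* H} (hf : Function.Injective f) {K : Subgroup H} [Fintype K]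
    (hK : K = f.range) (g : H → M) : ∑ h : K, g h = ∑ x, g (f x) := by
  subst hK
  exact (Fintype.sum_equiv (MonoidHom.ofInjective hf).toEquiv _ _ fun _ => rfl).symm

theorem Subgroup.natCard_eq_of_eq_range {G H : Type*} [Group G] [Group H] {f : G →* H}
    (hf : Function.Injective f) {K : Subgroup H} (hK : K = f.range) : Nat.card K = Nat.card G := by
  subst hK
  exact Nat.card_congr (MonoidHom.ofInjective hf).toEquiv.symm

section CharacterSums

variable {A R : Type*} [Group A] [Fintype A] [CommRing R] [IsDomain R]

theorem sum_coe_units_eq_zero {γ : A →* Rˣ} (hγ : γ ≠ 1) : ∑ x, (γ x : R) = 0 :=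
  sum_hom_units_eq_zero ((Units.coeHom R).comp γ) fun h =>
    hγ (MonoidHom.ext fun x => Units.ext (DFunLike.congr_fun h x))

theorem sum_coe_units_mul_sum_eq_zero {α β : A →* Rˣ} (hαβ : α ≠ β) :
    (∑ x, (α x : R)) * ∑ x, (β x : R) = 0 := by
  by_cases hα : α = 1
  · have hβ : β ≠ 1 := fun hβ => hαβ (hα.trans hβ.symm)
    rw [sum_coe_units_eq_zero hβ, mul_zero]
  · rw [sum_coe_units_eq_zero hα, zero_mul]

theorem sum_coe_units_mul_eq (α β : A →* Rˣ) [Decidable (∀ x, α x * β x = 1)] :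
    ∑ x, (α x : R) * β x = if ∀ x, α x * β x = 1 then (Fintype.card A : R) else 0 := by
  simp_rw [← Units.val_mul, ← MonoidHom.mul_apply]
  split_ifs with h
  · simp [h]
  · exact sum_coe_units_eq_zero fun h' => h fun x => by simpa using DFunLike.congr_fun h' x

/-- Here `f x y` stands for `χ(diag(x, y))` and `c + 2` for `p + 1`; the cross terms
`(∑ α) * (∑ β)` vanish because `α ≠ β`. -/
theorem sum_prod_eq_of_offDiag [DecidableEq A] {α β : A →* Rˣ} (hαβ : α ≠ β) (f : A → A → R)
    (c : R) (hcent : ∀ x, f x x = (c + 2) * α x * β x)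
    (hdiag : ∀ x y, x ≠ y → f x y = α x * β y + α y * β x) :
    ∑ xy : A × A, f xy.1 xy.2 = c * ∑ x, (α x : R) * β x := by
  have hf : ∀ x y, f x y = α x * β y + α y * β x + if x = y then c * (α x * β x) else 0 := by
    intro x y
    obtain rfl | hxy := eq_or_ne x y
    · rw [hcent, if_pos rfl]; ring
    · rw [hdiag x y hxy, if_neg hxy, add_zero]
  simp_rw [Fintype.sum_prod_type, hf, sum_add_distrib, sum_ite_eq, if_pos (mem_univ _),
    ← mul_sum, ← sum_mul, ← mul_sum]
  rw [sum_coe_units_mul_sum_eq_zero hαβ, add_zero, zero_add]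

end CharacterSums

open Polynomial in
theorem FiniteField.mem_range_algebraMap_of_pow_card_eq_self {K L : Type*} [Field K] [Fintype K]
    [Field L] [Algebra K L] {z : L} (hz : z ^ Fintype.card K = z) :
    z ∈ Set.range (algebraMap K L) := by
  have hprod : ∏ a : K, (X - C a) = (X ^ Fintype.card K - X : K[X]) := by
    have hmonic : (X ^ Fintype.card K - X : K[X]).Monic :=
      monic_X_pow_sub (by rw [degree_X]; exact_mod_cast Fintype.one_lt_card)
    have hcard : Multiset.card (X ^ Fintype.card K - X : K[X]).roots
        = (X ^ Fintype.card K - X : K[X]).natDegree := by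
      rw [roots_X_pow_card_sub_X, X_pow_card_sub_X_natDegree_eq _ Fintype.one_lt_card]
      rfl
    rw [← prod_multiset_X_sub_C_of_monic_of_roots_card_eq hmonic hcard, roots_X_pow_card_sub_X]
    rfl
  have heval := congrArg (eval₂ (algebraMap K L) z) hprod
  simp only [eval₂_finsetProd, eval₂_sub, eval₂_X, eval₂_C, eval₂_pow, hz, sub_self,
    prod_eq_zero_iff, sub_eq_zero] at heval
  obtain ⟨a, -, ha⟩ := heval
  exact ⟨a, ha.symm⟩

def diagHom (R : Type*) [CommRing R] : Rˣ × Rˣ →* GL (Fin 2) R where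
  toFun xy := diagGL xy.1 xy.2
  map_one' := Units.ext <| by
    simp only [diagGL, Units.val_one, ← Matrix.diagonal_one]
    congr
    ext i
    fin_cases i <;> rfl
  map_mul' _ _ := Units.ext <| by
    simp [diagGL, Matrix.diagonal_mul_diagonal]

theorem diagHom_injective (R : Type*) [CommRing R] : Function.Injective (diagHom R) := by
  intro xy xy' h
  have h' := congrArg (fun g : GL (Fin 2) R => (g : Matrix (Fin 2) (Fin 2) R)) h
  exact Prod.ext (Units.ext (congrFun (congrFun h' 0) 0)) (Units.ext (congrFun (congrFun h' 1) 1))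

theorem Tsplit_eq_range : Tsplit p = (diagHom (ZMod p)).range := by
  ext g
  constructor
  · intro hg
    obtain ⟨h10, h01⟩ : (g : Matrix (Fin 2) (Fin 2) (ZMod p)) 1 0 = 0 ∧ g.1 0 1 = 0 := hg
    have hdet := (Matrix.isUnit_iff_isUnit_det _).1 g.isUnit
    rw [Matrix.det_fin_two, h10, h01, mul_zero, sub_zero] at hdet
    refine ⟨((isUnit_of_mul_isUnit_left hdet).unit, (isUnit_of_mul_isUnit_right hdet).unit),
      Units.ext ?_⟩
    change Matrix.diagonal _ = _
    ext i j
    fin_cases i <;> fin_cases j <;> simp [h10, h01]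
  · rintro ⟨⟨x, y⟩, rfl⟩
    exact ⟨show Matrix.diagonal ![(x : ZMod p), y] 1 0 = 0 by simp,
      show Matrix.diagonal ![(x : ZMod p), y] 0 1 = 0 by simp⟩

theorem torusHom_injective (b : Basis (Fin 2) (ZMod p) (GaloisField p 2)) :
    Function.Injective (torusHom p b) :=
  Units.map_injective <| RingHom.injective
    ((LinearMap.toMatrixAlgEquiv b).toAlgHom.comp (Algebra.lmul (ZMod p) _)).toRingHom

theorem torusHom_algebraMap (b : Basis (Fin 2) (ZMod p) (GaloisField p 2)) (x : (ZMod p)ˣ) :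
    torusHom p b (Units.map (algebraMap (ZMod p) (GaloisField p 2)).toMonoidHom x)
      = diagGL x x := by
  have hscalar : Algebra.lmul (ZMod p) (GaloisField p 2) (algebraMap _ _ (x : ZMod p))
      = (x : ZMod p) • LinearMap.id := by
    ext w
    simp [Algebra.smul_def]
  apply Units.ext
  change LinearMap.toMatrixAlgEquiv b (Algebra.lmul (ZMod p) _ (algebraMap _ _ (x : ZMod p)))
    = Matrix.diagonal ![(x : ZMod p), x]
  rw [hscalar, map_smul, LinearMap.toMatrixAlgEquiv_id]
  ext i j
  fin_cases i <;> fin_cases j <;> simp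

theorem sum_torusHom_eq_sum_diagGL {M : Type*} [AddCommMonoid M] [Fintype (GaloisField p 2)ˣ]
    (b : Basis (Fin 2) (ZMod p) (GaloisField p 2)) (f : GL (Fin 2) (ZMod p) → M)
    (hf : ∀ z : (GaloisField p 2)ˣ, (z : GaloisField p 2) ^ p ≠ z → f (torusHom p b z) = 0) :
    ∑ z, f (torusHom p b z) = ∑ x : (ZMod p)ˣ, f (diagGL x x) := by
  have hinj : Function.Injective (Units.map (algebraMap (ZMod p) (GaloisField p 2)).toMonoidHom) :=
    Units.map_injective (algebraMap (ZMod p) (GaloisField p 2)).injective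
  refine (Fintype.sum_of_injective _ hinj _ _ (fun z hz => hf z fun hzp => hz ?_)
    fun x => (congrArg f (torusHom_algebraMap p b x)).symm).symm
  obtain ⟨x, hx⟩ := FiniteField.mem_range_algebraMap_of_pow_card_eq_self (K := ZMod p)
    (z := (z : GaloisField p 2)) (by rwa [ZMod.card])
  have hx0 : x ≠ 0 := by
    rintro rfl
    exact z.ne_zero (by rw [← hx, map_zero])
  exact ⟨Units.mk0 x hx0, Units.ext hx⟩

theorem Representation.finrank_invariants_eq_ite_of_sum_character {k G V A : Type*} [Field k]
    [CharZero k] [Group G] [Fintype G] [AddCommGroup V] [Module k V] [FiniteDimensional k V]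
    [Group A] [Fintype A] (ρ : Representation k G V) (α β : A →* kˣ)
    [Decidable (∀ x, α x * β x = 1)] {c : ℕ} (hcard : Nat.card G = c * Fintype.card A)
    (hsum : ∑ g, ρ.character g = c * ∑ x, (α x : k) * β x) :
    finrank k ρ.invariants = if ∀ x, α x * β x = 1 then 1 else 0 := by
  apply ρ.finrank_invariants_eq_of_sum_character
  rw [hsum, hcard, sum_coe_units_mul_eq]
  split_ifs <;> push_cast <;> ring

open scoped Classical in
/-- `V = π(α,β)` enters only through its character `χ`, given on `T` and `T'` by the character
table; the elliptic elements of `T'` are the `z` with `z ^ p ≠ z`. -/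
theorem stmt_17 (b : Basis (Fin 2) (ZMod p) (GaloisField p 2))
    (V : Type) [AddCommGroup V] [Module (AlgebraicClosure ℚ) V]
    [FiniteDimensional (AlgebraicClosure ℚ) V]
    (ρ : Representation (AlgebraicClosure ℚ) (GL (Fin 2) (ZMod p)) V)
    (α β : (ZMod p)ˣ →* (AlgebraicClosure ℚ)ˣ) (hαβ : α ≠ β)
    (χ : GL (Fin 2) (ZMod p) → AlgebraicClosure ℚ)
    (hχ : ∀ g, χ g = LinearMap.trace (AlgebraicClosure ℚ) V (ρ g))
    (hcent : ∀ x : (ZMod p)ˣ,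
      χ (diagGL x x) = ((p : AlgebraicClosure ℚ) + 1) * α x * β x)
    (hdiag : ∀ x y : (ZMod p)ˣ, x ≠ y →
      χ (diagGL x y) = (α x : AlgebraicClosure ℚ) * β y + (α y : AlgebraicClosure ℚ) * β x)
    (hell : ∀ z : (GaloisField p 2)ˣ, (z : GaloisField p 2) ^ p ≠ z →
      χ (torusHom p b z) = 0) :
    finrank (AlgebraicClosure ℚ)
        (Representation.invariants (ρ.comp (Tsplit p).subtype))
      = (if ∀ x : (ZMod p)ˣ, α x * β x = 1 then 1 else 0) ∧
    finrank (AlgebraicClosure ℚ)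
        (Representation.invariants (ρ.comp (Tnonsplit p b).subtype))
      = (if ∀ x : (ZMod p)ˣ, α x * β x = 1 then 1 else 0) := by
  let _ : Fintype (GaloisField p 2)ˣ := Fintype.ofFinite _
  have hres (H : Subgroup (GL (Fin 2) (ZMod p))) [Fintype H] :
      ∑ h : H, Representation.character (ρ.comp H.subtype) h = ∑ h : H, χ h :=
    sum_congr rfl fun h _ => (hχ h).symm
  refine ⟨Representation.finrank_invariants_eq_ite_of_sum_character _ α β (c := p - 1) ?_ ?_,
    Representation.finrank_invariants_eq_ite_of_sum_character _ α β (c := p + 1) ?_ ?_⟩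
  · rw [Subgroup.natCard_eq_of_eq_range (diagHom_injective _) (Tsplit_eq_range p), Nat.card_prod,
      Nat.card_eq_fintype_card, ZMod.card_units]
  · rw [hres, Subgroup.sum_eq_sum_of_eq_range (diagHom_injective _) (Tsplit_eq_range p)]
    refine sum_prod_eq_of_offDiag hαβ (fun x y => χ (diagGL x y)) _ (fun x => ?_) hdiag
    rw [hcent, Nat.cast_sub (Fact.out : p.Prime).one_le]
    ring
  · rw [Subgroup.natCard_eq_of_eq_range (torusHom_injective p b) (K := Tnonsplit p b) rfl,
      Nat.card_units, GaloisField.card p 2 two_ne_zero, ZMod.card_units, ← Nat.sq_sub_sq, one_pow]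
  · rw [hres, Subgroup.sum_eq_sum_of_eq_range (torusHom_injective p b) (K := Tnonsplit p b) rfl,
      sum_torusHom_eq_sum_diagGL p b χ hell, mul_sum]
    simp_rw [hcent, mul_assoc, Nat.cast_add, Nat.cast_one]
end
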